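/- arXiv:1908.02905 — 3 statements merged into one kernel-verified Lean document; each statement's English description precedes it below -/
import Mathlib

section
/- For any polynomial control system Σ on ℝ^n: (i) S_{k+1} ⊆ S_k for every k ≥ 0; (ii) there exists an integer r* such that S_k = S_{r*} for all k ≥ r* and S_{r*} = S_∞; (iii) consequently S_∞ = 𝕍(I_{M_{r*}}), so the set S_∞ of accessibility singular points is an algebraic set. -/
open MvPolynomial

/-- Evaluation of a polynomial vector field at a point of `ℝ^n`. -/
noncomputable def pvfEval {n : ℕ} (X : Fin n → MvPolynomial (Fin n) ℝ) (a : Fin n → ℝ) :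
    Fin n → ℝ := fun i => eval a (X i)

/-- Lie bracket of polynomial vector fields:
`[X,Y]_j = ∑ i, (X i * ∂Y_j/∂x_i − Y i * ∂X_j/∂x_i)`. -/
noncomputable def pBracket {n : ℕ} (X Y : Fin n → MvPolynomial (Fin n) ℝ) :
    Fin n → MvPolynomial (Fin n) ℝ :=
  fun j => ∑ i, (X i * pderiv i (Y j) - Y i * pderiv i (X j))

/-- Lie derivative of a polynomial along a polynomial vector field:
`L_X p = ∑ i, X i * ∂p/∂x_i`. -/
noncomputable def pLieDeriv {n : ℕ} (X : Fin n → MvPolynomial (Fin n) ℝ)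
    (p : MvPolynomial (Fin n) ℝ) : MvPolynomial (Fin n) ℝ :=
  ∑ i, X i * pderiv i p

/-- An ideal `I` is invariant under `L_X` if `L_X p ∈ I` for every `p ∈ I`. -/
def IdealInvariant {n : ℕ} (X : Fin n → MvPolynomial (Fin n) ℝ)
    (I : Ideal (MvPolynomial (Fin n) ℝ)) : Prop :=
  ∀ p ∈ I, pLieDeriv X p ∈ I

/-- The algebraic set `𝕍(J)` of an ideal `J`. -/
def zeroSet {n : ℕ} (J : Ideal (MvPolynomial (Fin n) ℝ)) : Set (Fin n → ℝ) :=
  {a | ∀ p ∈ J, eval a p = 0}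

/-- The vanishing ideal `𝕀(A)` of a set `A ⊆ ℝ^n`. -/
noncomputable def zeroIdeal {n : ℕ} (A : Set (Fin n → ℝ)) :
    Ideal (MvPolynomial (Fin n) ℝ) where
  carrier := {p | ∀ a ∈ A, eval a p = 0}
  add_mem' := fun hp hq a ha => by simp [hp a ha, hq a ha]
  zero_mem' := fun a ha => by simp
  smul_mem' := fun c p hp a ha => by simp [smul_eq_mul, hp a ha]

/-- The family `𝒞^k` of Lie brackets of depth at most `k` of the system vector fields
`f, g_1, …, g_m`: `𝒞^0 = {f, g_1, …, g_m}` and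
`𝒞^{k+1} = 𝒞^k ∪ {[X,h] : X ∈ {f, g_1, …, g_m}, h ∈ 𝒞^k}`. -/
def accFam {n m : ℕ} (f : Fin n → MvPolynomial (Fin n) ℝ)
    (g : Fin m → Fin n → MvPolynomial (Fin n) ℝ) :
    ℕ → Set (Fin n → MvPolynomial (Fin n) ℝ)
  | 0 => insert f (Set.range g)
  | k + 1 => accFam f g k ∪
      {h | ∃ X ∈ insert f (Set.range g), ∃ h' ∈ accFam f g k, h = pBracket X h'}

/-- `C^k(a) = span_ℝ {h(a) : h ∈ 𝒞^k}`. -/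
noncomputable def accSpan {n m : ℕ} (f : Fin n → MvPolynomial (Fin n) ℝ)
    (g : Fin m → Fin n → MvPolynomial (Fin n) ℝ) (k : ℕ) (a : Fin n → ℝ) :
    Submodule ℝ (Fin n → ℝ) :=
  Submodule.span ℝ ((fun h => pvfEval h a) '' accFam f g k)

/-- `C(a) = span_ℝ {h(a) : h ∈ 𝒞}`, where `𝒞 = ⋃ k, 𝒞^k`. -/
noncomputable def accSpanInf {n m : ℕ} (f : Fin n → MvPolynomial (Fin n) ℝ)
    (g : Fin m → Fin n → MvPolynomial (Fin n) ℝ) (a : Fin n → ℝ) :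
    Submodule ℝ (Fin n → ℝ) :=
  Submodule.span ℝ ((fun h => pvfEval h a) '' ⋃ k, accFam f g k)

/-- `S_k^{<l} = {a : dim C^k(a) < l}`. -/
def singularSetLt {n m : ℕ} (f : Fin n → MvPolynomial (Fin n) ℝ)
    (g : Fin m → Fin n → MvPolynomial (Fin n) ℝ) (k l : ℕ) : Set (Fin n → ℝ) :=
  {a | Module.finrank ℝ (accSpan f g k a) < l}

/-- `S_∞^{<l} = {a : dim C(a) < l}`;  `S_∞ = S_∞^{<n}`. -/
def singularSetInfLt {n m : ℕ} (f : Fin n → MvPolynomial (Fin n) ℝ)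
    (g : Fin m → Fin n → MvPolynomial (Fin n) ℝ) (l : ℕ) : Set (Fin n → ℝ) :=
  {a | Module.finrank ℝ (accSpanInf f g a) < l}

/-- The ideal `I_{M_k}^{<l}` generated by the determinants of all `l×l` submatrices of the
matrix whose columns are the elements of `𝒞^k` (choices of `l` columns from `𝒞^k` and
`l` rows). -/
noncomputable def minorIdeal {n m : ℕ} (f : Fin n → MvPolynomial (Fin n) ℝ)
    (g : Fin m → Fin n → MvPolynomial (Fin n) ℝ) (k l : ℕ) :
    Ideal (MvPolynomial (Fin n) ℝ) :=
  Ideal.span {p | ∃ (rows : Fin l → Fin n) (cols : Fin l → (Fin n → MvPolynomial (Fin n) ℝ)),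
    (∀ j, cols j ∈ accFam f g k) ∧ p = (Matrix.of fun i j => cols j (rows i)).det}

/-! The rank of the columns `h(a)`, `h ∈ 𝒞^k`, is `n` exactly when some `n × n` minor of the
evaluated matrix is nonzero, so `S_k = 𝕍(I_{M_k})`. The ideals `I_{M_k}` increase with `k`, hence
stabilise by the Hilbert basis theorem, and with them the sets `S_k`. For each point `a` the spans
`C^k(a)` also stabilise, at `C(a)`, since `ℝ^n` is finite dimensional; so `S_∞` is the eventual
value of the `S_k`. -/

section Minors

variable {K : Type*} [Field K]

lemma det_submatrix_eq_zero_of_finrank_span_lt {ι : Type*} [Fintype ι] {l : ℕ}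
    {S : Set (ι → K)} (hS : Module.finrank K (Submodule.span K S) < l)
    {w : Fin l → ι → K} (hw : ∀ j, w j ∈ S) (rows : Fin l → ι) :
    (Matrix.of fun i j => w j (rows i)).det = 0 := by
  by_contra hdet
  have hcols : LinearIndependent K fun j => LinearMap.funLeft K K rows (w j) :=
    Matrix.linearIndependent_cols_iff_isUnit.mpr
      ((Matrix.isUnit_iff_isUnit_det _).mpr (isUnit_iff_ne_zero.mpr hdet))
  have hspan : Submodule.span K (Set.range w) ≤ Submodule.span K S :=
    Submodule.span_mono (Set.range_subset_iff.mpr hw)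
  have := (finrank_span_eq_card (hcols.of_comp _)).symm.trans_le (Submodule.finrank_mono hspan)
  simp only [Fintype.card_fin] at this
  omega

lemma exists_det_ne_zero_of_span_eq_top {ι : Type*} [Fintype ι] [DecidableEq ι]
    {S : Set (ι → K)} (hS : Submodule.span K S = ⊤) :
    ∃ w : ι → ι → K, (∀ j, w j ∈ S) ∧ (Matrix.of fun i j => w j i).det ≠ 0 := by
  obtain ⟨b, hbS, hbspan, hbli⟩ := exists_linearIndependent K S
  let B := Module.Basis.mk hbli (by rw [Subtype.range_coe, hbspan, hS])
  let e := (Pi.basisFun K ι).indexEquiv B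
  refine ⟨fun j => B (e j), fun j => by simpa [B] using hbS (e j).2, ?_⟩
  have hcols : LinearIndependent K fun j => B (e j) := B.linearIndependent.comp e e.injective
  exact ((Matrix.isUnit_iff_isUnit_det _).mp
    (Matrix.linearIndependent_cols_iff_isUnit.mp hcols)).ne_zero

lemma finrank_span_lt_iff_forall_det_eq_zero {n : ℕ} (S : Set (Fin n → K)) :
    Module.finrank K (Submodule.span K S) < n ↔
      ∀ (rows : Fin n → Fin n) (w : Fin n → Fin n → K), (∀ j, w j ∈ S) →
        (Matrix.of fun i j => w j (rows i)).det = 0 := by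
  refine ⟨fun hS rows _ hw => det_submatrix_eq_zero_of_finrank_span_lt hS hw rows,
    fun h => ?_⟩
  by_contra hS
  have htop : Submodule.span K S = ⊤ := by
    apply Submodule.eq_top_of_finrank_eq
    have := (Submodule.span K S).finrank_le
    rw [Module.finrank_fin_fun] at this ⊢
    omega
  obtain ⟨w, hw, hdet⟩ := exists_det_ne_zero_of_span_eq_top htop
  exact hdet (h id w hw)

end Minors

lemma WellFoundedGT.exists_forall_ge_eq_iSup {α : Type*} [CompleteLattice α] [WellFoundedGT α]
    (a : ℕ →o α) : ∃ N, ∀ k ≥ N, a k = ⨆ i, a i := by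
  obtain ⟨N, hN⟩ := WellFoundedGT.monotone_chain_condition a
  have hsup : (⨆ i, a i) = a N := le_antisymm
    (iSup_le fun i => (le_total i N).elim (fun h => a.mono h) fun h => (hN i h).ge)
    (le_iSup a N)
  exact ⟨N, fun k hk => (hN k hk).symm.trans hsup.symm⟩

lemma mem_zeroSet_span_iff {n : ℕ} {T : Set (MvPolynomial (Fin n) ℝ)} {a : Fin n → ℝ} :
    a ∈ zeroSet (Ideal.span T) ↔ ∀ p ∈ T, eval a p = 0 :=
  ⟨fun ha p hp => ha p (Ideal.subset_span hp),
    fun ha _ hp => Ideal.span_le (I := RingHom.ker (eval a)).mpr ha hp⟩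

lemma eval_det_minor {n l : ℕ} (a : Fin n → ℝ) (rows : Fin l → Fin n)
    (cols : Fin l → Fin n → MvPolynomial (Fin n) ℝ) :
    eval a (Matrix.of fun i j => cols j (rows i)).det =
      (Matrix.of fun i j => pvfEval (cols j) a (rows i)).det := by
  rw [RingHom.map_det]
  rfl

section ControlSystem

variable {n m : ℕ} (f : Fin n → MvPolynomial (Fin n) ℝ)
    (g : Fin m → Fin n → MvPolynomial (Fin n) ℝ)

lemma accFam_mono : Monotone (accFam f g) :=
  monotone_nat_of_le_succ fun _ => Set.subset_union_left

lemma accSpan_mono (a : Fin n → ℝ) : Monotone fun k => accSpan f g k a :=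
  fun _ _ hkl => Submodule.span_mono (Set.image_mono (accFam_mono f g hkl))

lemma accSpanInf_eq_iSup (a : Fin n → ℝ) : accSpanInf f g a = ⨆ k, accSpan f g k a := by
  rw [accSpanInf, Set.image_iUnion, Submodule.span_iUnion]
  rfl

lemma singularSetLt_antitone (l : ℕ) : Antitone fun k => singularSetLt f g k l :=
  fun _ _ hkl _ ha => (Submodule.finrank_mono (accSpan_mono f g _ hkl)).trans_lt ha

lemma minorIdeal_mono (l : ℕ) : Monotone fun k => minorIdeal f g k l :=
  fun _ _ hkl => Ideal.span_mono <| by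
    rintro p ⟨rows, cols, hcols, rfl⟩
    exact ⟨rows, cols, fun j => accFam_mono f g hkl (hcols j), rfl⟩

theorem singularSetLt_eq_zeroSet (k : ℕ) :
    singularSetLt f g k n = zeroSet (minorIdeal f g k n) := by
  ext a
  rw [minorIdeal, mem_zeroSet_span_iff]
  refine (finrank_span_lt_iff_forall_det_eq_zero _).trans ⟨?_, ?_⟩
  · rintro h _ ⟨rows, cols, hcols, rfl⟩
    rw [eval_det_minor]
    exact h rows _ fun j => ⟨cols j, hcols j, rfl⟩
  · intro h rows w hw
    choose cols hcols hev using hw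
    obtain rfl : w = fun j => pvfEval (cols j) a := funext fun j => (hev j).symm
    rw [← eval_det_minor]
    exact h _ ⟨rows, cols, hcols, rfl⟩

theorem singularSetLt_eq_singularSetInfLt {l r : ℕ}
    (hr : ∀ k ≥ r, singularSetLt f g k l = singularSetLt f g r l) :
    singularSetLt f g r l = singularSetInfLt f g l := by
  ext a
  obtain ⟨N, hN⟩ := WellFoundedGT.exists_forall_ge_eq_iSup ⟨_, accSpan_mono f g a⟩
  have hNr : accSpan f g (max N r) a = accSpanInf f g a :=
    (hN _ (le_max_left N r)).trans (accSpanInf_eq_iSup f g a).symm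
  rw [← hr _ (le_max_right N r)]
  change Module.finrank ℝ (accSpan f g (max N r) a) < l ↔ Module.finrank ℝ (accSpanInf f g a) < l
  rw [hNr]

end ControlSystem

/-- For a polynomial control system on `ℝ^n`:
(i) `S_{k+1} ⊆ S_k`; (ii) there is `r*` with `S_k = S_{r*}` for all `k ≥ r*` and
`S_{r*} = S_∞`; (iii) `S_∞ = 𝕍(I_{M_{r*}})`, so `S_∞` is an algebraic set. -/
theorem singular_sets_stabilize {n m : ℕ} (f : Fin n → MvPolynomial (Fin n) ℝ)
    (g : Fin m → Fin n → MvPolynomial (Fin n) ℝ) :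
    (∀ k : ℕ, singularSetLt f g (k + 1) n ⊆ singularSetLt f g k n) ∧
    ∃ r : ℕ, (∀ k ≥ r, singularSetLt f g k n = singularSetLt f g r n) ∧
      singularSetLt f g r n = singularSetInfLt f g n ∧
      singularSetInfLt f g n = zeroSet (minorIdeal f g r n) := by
  refine ⟨fun k => singularSetLt_antitone f g n (Nat.le_succ k), ?_⟩
  obtain ⟨r, hr⟩ := WellFoundedGT.monotone_chain_condition ⟨_, minorIdeal_mono f g n⟩
  have hstab : ∀ k ≥ r, singularSetLt f g k n = singularSetLt f g r n := fun k hk => by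
    rw [singularSetLt_eq_zeroSet, singularSetLt_eq_zeroSet]
    exact congrArg zeroSet (hr k hk).symm
  have hinf := singularSetLt_eq_singularSetInfLt f g hstab
  exact ⟨r, hstab, hinf, by rw [← hinf, singularSetLt_eq_zeroSet]⟩
end

section
/- Let Σ be a generically strongly accessible polynomial control system on ℝ^n. Then the set of strong-accessibility singular points coincides with the set of accessibility singular points: S_∞^* = S_∞. -/
/-!
`S_∞ ⊆ S_∞^*` because `𝒞_0 ⊆ 𝒞`. For the converse, let `M` be the `ℝ[x]`-module spanned by `𝒞_0`
and `J` the ideal generated by the determinants of `n`-tuples of elements of `M`; it vanishes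
on `S_∞^*`, and generic strong accessibility makes it nonzero. Since `[X, M] ⊆ M` for
`X ∈ {f, g_1, …, g_m}` and
`L_X (det A) = ∑ r, det (A with row r replaced by [X, A r]) + tr (DX) * det A`,
the ideal `J` is invariant under `L_X`, hence under `L_h` for every `h ∈ 𝒞`, because
`L_[X,Y] = [L_X, L_Y]`. If some `a ∈ S_∞^*` had `dim C(a) = n`, then `n` fields of `𝒞` would be
independent at `a`; an ideal vanishing at `a` and invariant under such fields has all its Taylor
coefficients at `a` equal to zero (induction on their degree), so `J = 0`: a contradiction.
-/

open MvPolynomial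

/-- The family `𝒞_0^k`: `𝒞_0^0 = {g_1, …, g_m}` and
`𝒞_0^{k+1} = 𝒞_0^k ∪ {[X,h] : X ∈ {f, g_1, …, g_m}, h ∈ 𝒞_0^k}`. -/
def strongAccFam {n m : ℕ} (f : Fin n → MvPolynomial (Fin n) ℝ)
    (g : Fin m → Fin n → MvPolynomial (Fin n) ℝ) :
    ℕ → Set (Fin n → MvPolynomial (Fin n) ℝ)
  | 0 => Set.range g
  | k + 1 => strongAccFam f g k ∪
      {h | ∃ X ∈ insert f (Set.range g), ∃ h' ∈ strongAccFam f g k, h = pBracket X h'}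

/-- `C_0^k(a) = span_ℝ {h(a) : h ∈ 𝒞_0^k}`. -/
noncomputable def strongAccSpan {n m : ℕ} (f : Fin n → MvPolynomial (Fin n) ℝ)
    (g : Fin m → Fin n → MvPolynomial (Fin n) ℝ) (k : ℕ) (a : Fin n → ℝ) :
    Submodule ℝ (Fin n → ℝ) :=
  Submodule.span ℝ ((fun h => pvfEval h a) '' strongAccFam f g k)

/-- `C_0(a) = span_ℝ {h(a) : h ∈ 𝒞_0}`. -/
noncomputable def strongAccSpanInf {n m : ℕ} (f : Fin n → MvPolynomial (Fin n) ℝ)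
    (g : Fin m → Fin n → MvPolynomial (Fin n) ℝ) (a : Fin n → ℝ) :
    Submodule ℝ (Fin n → ℝ) :=
  Submodule.span ℝ ((fun h => pvfEval h a) '' ⋃ k, strongAccFam f g k)

/-- `S_k^{*<l} = {a : dim C_0^k(a) < l}`. -/
def strongSingularSetLt {n m : ℕ} (f : Fin n → MvPolynomial (Fin n) ℝ)
    (g : Fin m → Fin n → MvPolynomial (Fin n) ℝ) (k l : ℕ) : Set (Fin n → ℝ) :=
  {a | Module.finrank ℝ (strongAccSpan f g k a) < l}

/-- `S_∞^{*<l} = {a : dim C_0(a) < l}`;  `S_∞^* = S_∞^{*<n}`. -/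
def strongSingularSetInfLt {n m : ℕ} (f : Fin n → MvPolynomial (Fin n) ℝ)
    (g : Fin m → Fin n → MvPolynomial (Fin n) ℝ) (l : ℕ) : Set (Fin n → ℝ) :=
  {a | Module.finrank ℝ (strongAccSpanInf f g a) < l}

namespace Derivation

variable {R A ι : Type*} [CommSemiring R] [CommRing A] [Algebra R A] (D : Derivation R A A)

theorem leibniz_finset_prod [DecidableEq ι] (s : Finset ι) (u : ι → A) :
    D (∏ i ∈ s, u i) = ∑ k ∈ s, ∏ i ∈ s, Function.update u k (D (u k)) i := by
  induction s using Finset.induction_on with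
  | empty => simp
  | insert a s ha ih =>
    have hne : ∀ k ∈ s, k ≠ a := fun k hk h => ha (h ▸ hk)
    have hterm : ∀ k ∈ s, ∏ i ∈ insert a s, Function.update u k (D (u k)) i
        = u a * ∏ i ∈ s, Function.update u k (D (u k)) i := fun k hk => by
      rw [Finset.prod_insert ha, Function.update_of_ne (hne k hk).symm]
    have hself : ∏ i ∈ s, Function.update u a (D (u a)) i = ∏ i ∈ s, u i :=
      Finset.prod_congr rfl fun i hi => Function.update_of_ne (hne i hi) _ _
    rw [Finset.prod_insert ha (f := u), leibniz, ih, Finset.sum_insert ha,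
      Finset.sum_congr rfl hterm, ← Finset.mul_sum, Finset.prod_insert ha, Function.update_self,
      hself, smul_eq_mul, smul_eq_mul]
    ring

theorem map_det [Fintype ι] [DecidableEq ι] (M : Matrix ι ι A) :
    D M.det = ∑ r, (M.updateRow r fun j => D (M r j)).det := by
  simp only [Matrix.det_apply, map_sum, Units.smul_def, map_zsmul, leibniz_finset_prod,
    Finset.smul_sum]
  rw [Finset.sum_comm (γ := ι)]
  refine Finset.sum_congr rfl fun σ _ => ?_
  refine Eq.trans ?_ (Equiv.sum_comp σ _)
  refine Finset.sum_congr rfl fun k _ => ?_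
  congr 1
  refine Finset.prod_congr rfl fun i _ => ?_
  rcases eq_or_ne i k with rfl | hik
  · simp
  · simp [Matrix.updateRow_apply, hik, σ.injective.ne hik]

theorem map_mem_ideal_span {S : Set A} (hS : ∀ s ∈ S, D s ∈ Ideal.span S) {p : A}
    (hp : p ∈ Ideal.span S) : D p ∈ Ideal.span S := by
  induction hp using Submodule.span_induction with
  | mem s hs => exact hS s hs
  | zero => simp
  | add p q _ _ hp hq => simpa using add_mem hp hq
  | smul a p hp' hp =>
    rw [smul_eq_mul, Derivation.leibniz, smul_eq_mul, smul_eq_mul]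
    exact add_mem (Ideal.mul_mem_left _ a hp) (Ideal.mul_mem_right _ _ hp')

end Derivation

namespace Matrix

variable {R ι : Type*} [CommRing R] [Fintype ι] [DecidableEq ι]

theorem det_updateRow_eq_sum_mul_adjugate (A : Matrix ι ι R) (r : ι) (v : ι → R) :
    (A.updateRow r v).det = ∑ j, v j * A.adjugate j r := by
  rw [← cramer_transpose_apply, cramer_eq_adjugate_mulVec, ← adjugate_transpose]
  simp [mulVec, dotProduct, mul_comm]

theorem sum_det_updateRow_mul (A C : Matrix ι ι R) :
    ∑ r, (A.updateRow r ((A * C) r)).det = C.trace * A.det := by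
  have htr : ∑ r, ∑ j, (A * C) r j * A.adjugate j r = (A * C * A.adjugate).trace := by
    simp [trace, mul_apply]
  simp only [det_updateRow_eq_sum_mul_adjugate, htr]
  rw [trace_mul_comm, ← mul_assoc, adjugate_mul, smul_mul, one_mul, trace_smul, smul_eq_mul,
    mul_comm]

end Matrix

theorem exists_linearIndependent_comp_of_span_image_eq_top {K E ι α : Type*} [DivisionRing K]
    [AddCommGroup E] [Module K E] (b : Module.Basis ι K E) {φ : α → E} {F : Set α}
    (hF : Submodule.span K (φ '' F) = ⊤) :
    ∃ v : ι → α, (∀ i, v i ∈ F) ∧ LinearIndependent K (φ ∘ v) := by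
  let b' := Module.Basis.ofSpan hF.ge
  let e := b.indexEquiv b'
  have hmem : ∀ i, ∃ x ∈ F, φ x = b' (e i) := fun i => Module.Basis.ofSpan_subset hF.ge ⟨e i, rfl⟩
  choose v hvF hv using hmem
  refine ⟨v, hvF, ?_⟩
  have : φ ∘ v = b' ∘ e := funext hv
  rw [this]
  exact b'.linearIndependent.comp e e.injective

theorem Submodule.eq_top_of_not_finrank_lt {K : Type*} [Field K] {n : ℕ}
    {W : Submodule K (Fin n → K)} (h : ¬ Module.finrank K W < n) : W = ⊤ := by
  refine Submodule.eq_top_of_finrank_eq (le_antisymm (Submodule.finrank_le W) ?_)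
  rw [Module.finrank_fin_fun]
  omega

namespace MvPolynomial

theorem coeff_mul_eq_coeff_zero_mul {σ R : Type*} [CommSemiring R] {q r : MvPolynomial σ R}
    {β : σ →₀ ℕ} (hr : ∀ v : σ →₀ ℕ, v.degree < β.degree → coeff v r = 0) :
    coeff β (q * r) = coeff 0 q * coeff β r := by
  classical
  rw [coeff_mul, Finset.sum_eq_single (0, β)]
  · rintro ⟨u, v⟩ huv hne
    have huvβ : u + v = β := Finset.HasAntidiagonal.mem_antidiagonal.1 huv
    have hu : u ≠ 0 := by rintro rfl; simp_all
    have hdeg : v.degree < β.degree := by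
      rw [← huvβ, map_add, lt_add_iff_pos_left, pos_iff_ne_zero]
      exact (Finsupp.degree_eq_zero_iff u).not.2 hu
    rw [hr v hdeg, mul_zero]
  · simp

variable {σ R : Type*} [CommRing R]

/-- `taylorEquiv a p = p (x + a)`, whose coefficients are the Taylor coefficients of `p` at `a`. -/
noncomputable def taylorEquiv (a : σ → R) : MvPolynomial σ R ≃ₐ[R] MvPolynomial σ R :=
  AlgEquiv.ofAlgHom (aeval fun i => X i + C (a i)) (aeval fun i => X i - C (a i))
    (by ext; simp) (by ext; simp)

theorem eval_zero_taylorEquiv (a : σ → R) (p : MvPolynomial σ R) :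
    eval 0 (taylorEquiv a p) = eval a p := by
  have h : (eval 0).comp (taylorEquiv a : MvPolynomial σ R →+* MvPolynomial σ R) = eval a := by
    ext <;> simp [taylorEquiv]
  exact RingHom.congr_fun h p

theorem pderiv_taylorEquiv [DecidableEq σ] (a : σ → R) (j : σ) (p : MvPolynomial σ R) :
    pderiv j (taylorEquiv a p) = taylorEquiv a (pderiv j p) := by
  induction p using MvPolynomial.induction_on with
  | C r => simp [taylorEquiv]
  | add p q hp hq => simp [hp, hq]
  | mul_X p i hp =>
    simp only [taylorEquiv, AlgEquiv.ofAlgHom_apply] at hp ⊢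
    rw [map_mul, Derivation.leibniz, hp, Derivation.leibniz, map_add]
    rcases eq_or_ne j i with rfl | h <;> simp [pderiv_X, *]

end MvPolynomial

section VectorField

variable {n : ℕ}

noncomputable def lieDerivation (V : Fin n → MvPolynomial (Fin n) ℝ) :
    Derivation ℝ (MvPolynomial (Fin n) ℝ) (MvPolynomial (Fin n) ℝ) :=
  ∑ i, V i • pderiv i

@[simp]
theorem lieDerivation_apply (V : Fin n → MvPolynomial (Fin n) ℝ) (p : MvPolynomial (Fin n) ℝ) :
    lieDerivation V p = pLieDeriv V p := by
  rw [lieDerivation, ← Derivation.coeFnAddMonoidHom_apply, map_sum, Finset.sum_apply]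
  simp [pLieDeriv]

theorem pLieDeriv_smul (V : Fin n → MvPolynomial (Fin n) ℝ) (p q : MvPolynomial (Fin n) ℝ) :
    pLieDeriv (p • V) q = p * pLieDeriv V q := by
  simp [pLieDeriv, Finset.mul_sum, mul_assoc]

@[simp]
theorem pvfEval_zero (a : Fin n → ℝ) : pvfEval 0 a = 0 := by
  funext j; simp [pvfEval]

@[simp]
theorem pvfEval_add (V W : Fin n → MvPolynomial (Fin n) ℝ) (a : Fin n → ℝ) :
    pvfEval (V + W) a = pvfEval V a + pvfEval W a := by
  funext j; simp [pvfEval]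

@[simp]
theorem pvfEval_smul (p : MvPolynomial (Fin n) ℝ) (V : Fin n → MvPolynomial (Fin n) ℝ)
    (a : Fin n → ℝ) : pvfEval (p • V) a = eval a p • pvfEval V a := by
  funext j; simp [pvfEval]

theorem pLieDeriv_X (V : Fin n → MvPolynomial (Fin n) ℝ) (k : Fin n) :
    pLieDeriv V (X k) = V k := by
  simp [pLieDeriv, pderiv_X, Pi.single_apply]

theorem pBracket_apply (V W : Fin n → MvPolynomial (Fin n) ℝ) (j : Fin n) :
    pBracket V W j = pLieDeriv V (W j) - pLieDeriv W (V j) := by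
  simp [pBracket, pLieDeriv, Finset.sum_sub_distrib]

theorem lieDerivation_pBracket (V W : Fin n → MvPolynomial (Fin n) ℝ) :
    lieDerivation (pBracket V W) = ⁅lieDerivation V, lieDerivation W⁆ := by
  refine MvPolynomial.derivation_ext fun k => ?_
  simp [Derivation.commutator_apply, pLieDeriv_X, pBracket_apply]

theorem pBracket_smul_right (V W : Fin n → MvPolynomial (Fin n) ℝ) (p : MvPolynomial (Fin n) ℝ) :
    pBracket V (p • W) = p • pBracket V W + pLieDeriv V p • W := by
  funext j
  simp only [pBracket_apply, ← lieDerivation_apply, Pi.add_apply, Pi.smul_apply, smul_eq_mul,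
    Derivation.leibniz]
  simp only [lieDerivation_apply, pLieDeriv_smul]
  ring

theorem pBracket_mem_span {V : Fin n → MvPolynomial (Fin n) ℝ}
    {F : Set (Fin n → MvPolynomial (Fin n) ℝ)}
    (hF : ∀ W ∈ F, pBracket V W ∈ Submodule.span (MvPolynomial (Fin n) ℝ) F)
    {W : Fin n → MvPolynomial (Fin n) ℝ} (hW : W ∈ Submodule.span (MvPolynomial (Fin n) ℝ) F) :
    pBracket V W ∈ Submodule.span (MvPolynomial (Fin n) ℝ) F := by
  induction hW using Submodule.span_induction with
  | mem W hW => exact hF W hW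
  | zero =>
    convert Submodule.zero_mem _
    funext j; simp [pBracket]
  | add W W' _ _ hW hW' =>
    convert add_mem hW hW' using 1
    funext j
    simp only [pBracket, Pi.add_apply, map_add, ← Finset.sum_add_distrib]
    exact Finset.sum_congr rfl fun i _ => by ring
  | smul p W hW' hW =>
    rw [pBracket_smul_right]
    exact add_mem (Submodule.smul_mem _ _ hW) (Submodule.smul_mem _ _ hW')

theorem pvfEval_mem_span_of_mem_span {F : Set (Fin n → MvPolynomial (Fin n) ℝ)}
    {W : Fin n → MvPolynomial (Fin n) ℝ} (hW : W ∈ Submodule.span (MvPolynomial (Fin n) ℝ) F)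
    (a : Fin n → ℝ) : pvfEval W a ∈ Submodule.span ℝ ((pvfEval · a) '' F) := by
  induction hW using Submodule.span_induction with
  | mem W hW => exact Submodule.subset_span ⟨W, hW, rfl⟩
  | zero => simp
  | add W W' _ _ hW hW' => simpa using add_mem hW hW'
  | smul p W _ hW => simpa using Submodule.smul_mem _ (eval a p) hW

theorem IdealInvariant.pBracket {V W : Fin n → MvPolynomial (Fin n) ℝ}
    {I : Ideal (MvPolynomial (Fin n) ℝ)} (hV : IdealInvariant V I) (hW : IdealInvariant W I) :
    IdealInvariant (pBracket V W) I := by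
  intro p hp
  rw [← lieDerivation_apply, lieDerivation_pBracket, Derivation.commutator_apply]
  simp only [lieDerivation_apply]
  exact sub_mem (hV _ (hW p hp)) (hW _ (hV p hp))

theorem eval_det_ne_zero_iff (A : Matrix (Fin n) (Fin n) (MvPolynomial (Fin n) ℝ))
    (a : Fin n → ℝ) : eval a A.det ≠ 0 ↔ LinearIndependent ℝ fun i => pvfEval (A i) a := by
  rw [RingHom.map_det, ← isUnit_iff_ne_zero, ← Matrix.isUnit_iff_isUnit_det,
    ← Matrix.linearIndependent_rows_iff_isUnit]
  rfl

theorem taylorEquiv_pLieDeriv (a : Fin n → ℝ) (V : Fin n → MvPolynomial (Fin n) ℝ)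
    (p : MvPolynomial (Fin n) ℝ) :
    taylorEquiv a (pLieDeriv V p) =
      pLieDeriv (fun i => taylorEquiv a (V i)) (taylorEquiv a p) := by
  simp [pLieDeriv, pderiv_taylorEquiv]

end VectorField

def rowDetIdeal {R ι : Type*} [CommRing R] [Fintype ι] [DecidableEq ι]
    (M : Submodule R (ι → R)) : Ideal R :=
  Ideal.span {d | ∃ A : Matrix ι ι R, (∀ i, A i ∈ M) ∧ A.det = d}

section DetIdeal

variable {n : ℕ}

theorem idealInvariant_rowDetIdeal {V : Fin n → MvPolynomial (Fin n) ℝ}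
    {M : Submodule (MvPolynomial (Fin n) ℝ) (Fin n → MvPolynomial (Fin n) ℝ)}
    (hM : ∀ W ∈ M, pBracket V W ∈ M) : IdealInvariant V (rowDetIdeal M) := by
  intro p hp
  rw [← lieDerivation_apply]
  refine (lieDerivation V).map_mem_ideal_span ?_ hp
  rintro _ ⟨A, hA, rfl⟩
  have hrow : ∀ r, (fun j => lieDerivation V (A r j))
      = pBracket V (A r) + (A * Matrix.of fun k j => pderiv k (V j)) r := by
    intro r; funext j; simp [pBracket_apply, Matrix.mul_apply, pLieDeriv]
  simp only [Derivation.map_det, hrow, Matrix.det_updateRow_add, Finset.sum_add_distrib,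
    Matrix.sum_det_updateRow_mul]
  refine add_mem (sum_mem fun r _ => Ideal.subset_span ⟨_, fun i => ?_, rfl⟩)
    (Ideal.mul_mem_left _ _ (Ideal.subset_span ⟨A, hA, rfl⟩))
  rcases eq_or_ne i r with rfl | h
  · simpa using hM _ (hA i)
  · simpa [Matrix.updateRow_ne h] using hA i

theorem mem_zeroSet_rowDetIdeal
    {M : Submodule (MvPolynomial (Fin n) ℝ) (Fin n → MvPolynomial (Fin n) ℝ)}
    {a : Fin n → ℝ} {W : Submodule ℝ (Fin n → ℝ)} (hW : Module.finrank ℝ W < n)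
    (hMW : ∀ V ∈ M, pvfEval V a ∈ W) : a ∈ zeroSet (rowDetIdeal M) := by
  suffices h : rowDetIdeal M ≤ RingHom.ker (eval a) from fun p hp => h hp
  refine Ideal.span_le.2 ?_
  rintro _ ⟨A, hA, rfl⟩
  by_contra hne
  have hli := (eval_det_ne_zero_iff A a).1 hne
  have hle : Submodule.span ℝ (Set.range fun i => pvfEval (A i) a) ≤ W :=
    Submodule.span_le.2 (Set.range_subset_iff.2 fun i => hMW _ (hA i))
  have := Submodule.finrank_mono hle
  rw [finrank_span_eq_card hli, Fintype.card_fin] at this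
  omega

theorem rowDetIdeal_span_ne_bot {F : Set (Fin n → MvPolynomial (Fin n) ℝ)} {b : Fin n → ℝ}
    (hb : Submodule.span ℝ ((pvfEval · b) '' F) = ⊤) :
    rowDetIdeal (Submodule.span (MvPolynomial (Fin n) ℝ) F) ≠ ⊥ := by
  obtain ⟨V, hVF, hV⟩ :=
    exists_linearIndependent_comp_of_span_image_eq_top (Pi.basisFun ℝ (Fin n)) hb
  have hdet : (Matrix.of V).det ∈ rowDetIdeal (Submodule.span (MvPolynomial (Fin n) ℝ) F) :=
    Ideal.subset_span ⟨Matrix.of V, fun i => Submodule.subset_span (hVF i), rfl⟩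
  have hne : eval b (Matrix.of V).det ≠ 0 := (eval_det_ne_zero_iff _ b).2 hV
  intro hbot
  rw [hbot, Ideal.mem_bot] at hdet
  simp [hdet] at hne

end DetIdeal

section Rigidity

variable {n : ℕ}

theorem eq_zero_of_pLieDeriv_mem_of_eval_zero {S : Set (MvPolynomial (Fin n) ℝ)}
    {V : Fin n → Fin n → MvPolynomial (Fin n) ℝ} (hS : ∀ i, ∀ p ∈ S, pLieDeriv (V i) p ∈ S)
    (hS0 : ∀ p ∈ S, eval 0 p = 0) (hV : LinearIndependent ℝ fun i => pvfEval (V i) 0)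
    {p : MvPolynomial (Fin n) ℝ} (hp : p ∈ S) : p = 0 := by
  let c : Matrix (Fin n) (Fin n) ℝ := Matrix.of fun i => pvfEval (V i) 0
  have hc : Function.Injective c.mulVec :=
    Matrix.mulVec_injective_iff_isUnit.2 (Matrix.linearIndependent_rows_iff_isUnit.1 hV)
  suffices h : ∀ k, ∀ α : Fin n →₀ ℕ, α.degree = k → ∀ p ∈ S, coeff α p = 0 from
    MvPolynomial.ext _ _ fun α => h _ α rfl p hp
  intro k
  induction k using Nat.strong_induction_on with
  | _ k ih =>
  intro α hαk p hp
  rcases eq_or_ne α 0 with rfl | hα0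
  · simpa [eval_zero, constantCoeff_eq] using hS0 p hp
  obtain ⟨j, hj⟩ : ∃ j, α j ≠ 0 := by
    by_contra! h
    exact hα0 (Finsupp.ext h)
  set β := α - Finsupp.single j 1
  have hαβ : β + Finsupp.single j 1 = α :=
    tsub_add_cancel_of_le (Finsupp.single_le_iff.2 (Nat.one_le_iff_ne_zero.2 hj))
  have hβk : β.degree < k := by
    rw [← hαk, ← hαβ, map_add, Finsupp.degree_single]; omega
  -- the lower-degree coefficients of `∂ⱼ p` vanish,
  -- so `coeff β (L_{V i} p) = ∑ j, c i j * coeff β (∂ⱼ p)`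
  have hlow : ∀ i, ∀ v : Fin n →₀ ℕ, v.degree < β.degree → coeff v (pderiv i p) = 0 := by
    intro i v hv
    rw [coeff_pderiv, ih _ (by rw [map_add, Finsupp.degree_single]; omega) _ rfl p hp, zero_mul]
  have hgrad : c.mulVec (fun i => coeff β (pderiv i p)) = 0 := by
    funext i
    have := ih _ hβk β rfl _ (hS i p hp)
    simpa [pLieDeriv, coeff_sum, coeff_mul_eq_coeff_zero_mul (hlow _), Matrix.mulVec,
      dotProduct, c, pvfEval, eval_zero, constantCoeff_eq] using this
  have hj0 := congrFun (hc (hgrad.trans (Matrix.mulVec_zero c).symm)) j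
  rw [Pi.zero_apply, coeff_pderiv, hαβ] at hj0
  exact (mul_eq_zero.1 hj0).resolve_right (by positivity)

theorem Ideal.eq_bot_of_idealInvariant_of_mem_zeroSet {I : Ideal (MvPolynomial (Fin n) ℝ)}
    {V : Fin n → Fin n → MvPolynomial (Fin n) ℝ} {a : Fin n → ℝ}
    (hI : ∀ i, IdealInvariant (V i) I) (ha : a ∈ zeroSet I)
    (hV : LinearIndependent ℝ fun i => pvfEval (V i) a) : I = ⊥ := by
  refine (Submodule.eq_bot_iff _).2 fun p hp => (taylorEquiv a).injective ?_
  rw [map_zero]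
  refine eq_zero_of_pLieDeriv_mem_of_eval_zero (S := taylorEquiv a '' I)
    (V := fun i j => taylorEquiv a (V i j)) ?_ ?_ ?_ ⟨p, hp, rfl⟩
  · rintro i _ ⟨q, hq, rfl⟩
    exact ⟨_, hI i q hq, taylorEquiv_pLieDeriv a (V i) q⟩
  · rintro _ ⟨q, hq, rfl⟩
    rw [eval_zero_taylorEquiv]
    exact ha q hq
  · convert hV using 2 with i
    funext j
    exact eval_zero_taylorEquiv a (V i j)

end Rigidity

section ControlSystem

variable {n m : ℕ} (f : Fin n → MvPolynomial (Fin n) ℝ)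
  (g : Fin m → Fin n → MvPolynomial (Fin n) ℝ)

theorem strongAccFam_subset_accFam (k : ℕ) : strongAccFam f g k ⊆ accFam f g k := by
  induction k with
  | zero => exact Set.subset_insert _ _
  | succ k ih =>
    rintro h (hh | ⟨X, hX, h', hh', rfl⟩)
    · exact Or.inl (ih hh)
    · exact Or.inr ⟨X, hX, h', ih hh', rfl⟩

theorem singularSetInfLt_subset_strongSingularSetInfLt (l : ℕ) :
    singularSetInfLt f g l ⊆ strongSingularSetInfLt f g l := fun _ ha =>
  (Submodule.finrank_mono (Submodule.span_mono (Set.image_mono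
    (Set.iUnion_mono (strongAccFam_subset_accFam f g))))).trans_lt ha

theorem pBracket_mem_span_strongAccFam {X : Fin n → MvPolynomial (Fin n) ℝ}
    (hX : X ∈ insert f (Set.range g)) {W : Fin n → MvPolynomial (Fin n) ℝ}
    (hW : W ∈ Submodule.span (MvPolynomial (Fin n) ℝ) (⋃ k, strongAccFam f g k)) :
    pBracket X W ∈ Submodule.span (MvPolynomial (Fin n) ℝ) (⋃ k, strongAccFam f g k) := by
  refine pBracket_mem_span (fun W hW => Submodule.subset_span ?_) hW
  obtain ⟨k, hk⟩ := Set.mem_iUnion.1 hW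
  exact Set.mem_iUnion.2 ⟨k + 1, Or.inr ⟨X, hX, W, hk, rfl⟩⟩

theorem IdealInvariant.of_mem_accFam {I : Ideal (MvPolynomial (Fin n) ℝ)}
    (hI : ∀ X ∈ insert f (Set.range g), IdealInvariant X I) {k : ℕ}
    {h : Fin n → MvPolynomial (Fin n) ℝ} (hh : h ∈ accFam f g k) : IdealInvariant h I := by
  induction k generalizing h with
  | zero => exact hI h hh
  | succ k ih =>
    rcases hh with hh | ⟨X, hX, h', hh', rfl⟩
    · exact ih hh
    · exact (hI X hX).pBracket (ih hh')

theorem strongSingularSetInfLt_subset_singularSetInfLt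
    (hgen : strongSingularSetInfLt f g n ≠ Set.univ) :
    strongSingularSetInfLt f g n ⊆ singularSetInfLt f g n := by
  intro a ha
  by_contra hA
  obtain ⟨b, hb⟩ := (Set.ne_univ_iff_exists_notMem _).1 hgen
  have hJ := rowDetIdeal_span_ne_bot (Submodule.eq_top_of_not_finrank_lt hb)
  obtain ⟨V, hVacc, hV⟩ := exists_linearIndependent_comp_of_span_image_eq_top
    (Pi.basisFun ℝ (Fin n)) (Submodule.eq_top_of_not_finrank_lt hA)
  refine hJ (Ideal.eq_bot_of_idealInvariant_of_mem_zeroSet (fun i => ?_)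
    (mem_zeroSet_rowDetIdeal ha fun W hW => pvfEval_mem_span_of_mem_span hW a) hV)
  obtain ⟨k, hk⟩ := Set.mem_iUnion.1 (hVacc i)
  exact IdealInvariant.of_mem_accFam f g
    (fun X hX => idealInvariant_rowDetIdeal fun W => pBracket_mem_span_strongAccFam f g hX) hk

end ControlSystem

/-- For a generically strongly accessible polynomial control system,
the strong-accessibility singular set equals the accessibility singular set:
`S_∞^* = S_∞`. -/
theorem strong_singular_set_eq_singular_set {n m : ℕ}
    (f : Fin n → MvPolynomial (Fin n) ℝ) (g : Fin m → Fin n → MvPolynomial (Fin n) ℝ)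
    (hgen : strongSingularSetInfLt f g n ≠ Set.univ) :
    strongSingularSetInfLt f g n = singularSetInfLt f g n :=
  (strongSingularSetInfLt_subset_singularSetInfLt f g hgen).antisymm
    (singularSetInfLt_subset_strongSingularSetInfLt f g n)
end

section
/- Let Σ be a polynomial control system on ℝ^n. Then: (i) there exists an integer r̂ such that C^{#r̂} = C^{#r̂+1}; (ii) for any k with C^{#k} = C^{#k+1}, one has C^{#m} = C^{#k} for all m ≥ k, and S_k = S_∞. -/
open MvPolynomial

/-- The submodule `C^{#k}` of the `ℝ[x]`-module `ℝ[x]^n` generated by `𝒞^k`. -/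
noncomputable def accModule {n m : ℕ} (f : Fin n → MvPolynomial (Fin n) ℝ)
    (g : Fin m → Fin n → MvPolynomial (Fin n) ℝ) (k : ℕ) :
    Submodule (MvPolynomial (Fin n) ℝ) (Fin n → MvPolynomial (Fin n) ℝ) :=
  Submodule.span (MvPolynomial (Fin n) ℝ) (accFam f g k)

lemma pBracket_add' {n : ℕ} (X Y Z : Fin n → MvPolynomial (Fin n) ℝ) :
    pBracket X (Y + Z) = pBracket X Y + pBracket X Z := by
  funext j
  simp only [pBracket, Pi.add_apply, map_add, ← Finset.sum_add_distrib]
  exact Finset.sum_congr rfl fun i _ => by ring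

lemma pBracket_smul' {n : ℕ} (X Y : Fin n → MvPolynomial (Fin n) ℝ)
    (p : MvPolynomial (Fin n) ℝ) :
    pBracket X (p • Y) = p • pBracket X Y + (pLieDeriv X p) • Y := by
  funext j
  simp only [pBracket, pLieDeriv, Pi.add_apply, Pi.smul_apply, smul_eq_mul,
    Finset.mul_sum, Finset.sum_mul, ← Finset.sum_add_distrib]
  refine Finset.sum_congr rfl fun i _ => ?_
  rw [pderiv_mul]
  ring

lemma pBracket_zero' {n : ℕ} (X : Fin n → MvPolynomial (Fin n) ℝ) :
    pBracket X (0 : Fin n → MvPolynomial (Fin n) ℝ) = 0 := by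
  funext j
  simp [pBracket]

lemma accFam_succ_subset {n m : ℕ} (f : Fin n → MvPolynomial (Fin n) ℝ)
    (g : Fin m → Fin n → MvPolynomial (Fin n) ℝ) (k : ℕ) :
    accFam f g k ⊆ accFam f g (k + 1) :=
  Set.subset_union_left

lemma accModule_mono {n m : ℕ} (f : Fin n → MvPolynomial (Fin n) ℝ)
    (g : Fin m → Fin n → MvPolynomial (Fin n) ℝ) : Monotone (accModule f g) := by
  apply monotone_nat_of_le_succ
  intro k
  exact Submodule.span_mono (accFam_succ_subset f g k)

lemma pBracket_mem_accModule {n m : ℕ} (f : Fin n → MvPolynomial (Fin n) ℝ)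
    (g : Fin m → Fin n → MvPolynomial (Fin n) ℝ) (k : ℕ)
    {X : Fin n → MvPolynomial (Fin n) ℝ} (hX : X ∈ insert f (Set.range g))
    {h : Fin n → MvPolynomial (Fin n) ℝ} (hh : h ∈ accModule f g k) :
    pBracket X h ∈ accModule f g (k + 1) := by
  induction hh using Submodule.span_induction with
  | mem y hy => exact Submodule.subset_span (Or.inr ⟨X, hX, y, hy, rfl⟩)
  | zero => rw [pBracket_zero']; exact zero_mem _
  | add y z _ _ ihy ihz => rw [pBracket_add']; exact add_mem ihy ihz
  | smul p y hy ihy =>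
      rw [pBracket_smul']
      refine add_mem (Submodule.smul_mem _ _ ihy) (Submodule.smul_mem _ _ ?_)
      exact accModule_mono f g (Nat.le_succ k) hy

lemma pvfEval_mem_span {n : ℕ} (S : Set (Fin n → MvPolynomial (Fin n) ℝ))
    {h : Fin n → MvPolynomial (Fin n) ℝ}
    (hh : h ∈ Submodule.span (MvPolynomial (Fin n) ℝ) S) (a : Fin n → ℝ) :
    pvfEval h a ∈ Submodule.span ℝ ((fun h => pvfEval h a) '' S) := by
  induction hh using Submodule.span_induction with
  | mem y hy => exact Submodule.subset_span ⟨y, hy, rfl⟩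
  | zero =>
      have : pvfEval (0 : Fin n → MvPolynomial (Fin n) ℝ) a = 0 := by
        funext i; simp [pvfEval]
      rw [this]; exact zero_mem _
  | add y z _ _ ihy ihz =>
      have : pvfEval (y + z) a = pvfEval y a + pvfEval z a := by
        funext i; simp [pvfEval]
      rw [this]; exact add_mem ihy ihz
  | smul p y _ ihy =>
      have : pvfEval (p • y) a = (eval a p) • pvfEval y a := by
        funext i; simp [pvfEval]
      rw [this]; exact Submodule.smul_mem _ _ ihy

/-- (i) There is `r̂` with `C^{#r̂} = C^{#r̂+1}`; (ii) whenever
`C^{#k} = C^{#k+1}`, one has `C^{#m'} = C^{#k}` for all `m' ≥ k` and `S_k = S_∞`. -/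
theorem acc_module_chain_stabilizes {n m : ℕ}
    (f : Fin n → MvPolynomial (Fin n) ℝ) (g : Fin m → Fin n → MvPolynomial (Fin n) ℝ) :
    (∃ r : ℕ, accModule f g r = accModule f g (r + 1)) ∧
    ∀ k : ℕ, accModule f g k = accModule f g (k + 1) →
      (∀ m' ≥ k, accModule f g m' = accModule f g k) ∧
      singularSetLt f g k n = singularSetInfLt f g n := by
  constructor
  · obtain ⟨r, hr⟩ := monotone_stabilizes_iff_noetherian.mpr inferInstance
      (⟨accModule f g, accModule_mono f g⟩ : ℕ →o
        Submodule (MvPolynomial (Fin n) ℝ) (Fin n → MvPolynomial (Fin n) ℝ))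
    exact ⟨r, hr (r + 1) (Nat.le_succ r)⟩
  · intro k hk
    have hstep : ∀ m' ≥ k, accModule f g m' = accModule f g k := by
      intro m' hm'
      induction m', hm' using Nat.le_induction with
      | base => rfl
      | succ m' hm' ih =>
          refine le_antisymm ?_ (ih ▸ accModule_mono f g (Nat.le_succ m'))
          apply Submodule.span_le.mpr
          rintro h (hh | ⟨X, hX, h', hh', rfl⟩)
          · exact ih ▸ Submodule.subset_span hh
          · have hmem : h' ∈ accModule f g k := ih ▸ Submodule.subset_span hh'
            have := pBracket_mem_accModule f g k hX hmem
            rwa [← hk] at this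
    refine ⟨hstep, ?_⟩
    have hall : ∀ j, accModule f g j ≤ accModule f g k := by
      intro j
      rcases le_or_gt j k with hj | hj
      · exact accModule_mono f g hj
      · exact le_of_eq (hstep j hj.le)
    have hspan : ∀ a, accSpan f g k a = accSpanInf f g a := by
      intro a
      apply le_antisymm
      · exact Submodule.span_mono (Set.image_mono
          (Set.subset_iUnion (accFam f g) k))
      · apply Submodule.span_le.mpr
        rintro v ⟨h, hh, rfl⟩
        obtain ⟨_, ⟨j, rfl⟩, hj⟩ := hh
        exact pvfEval_mem_span _ (hall j (Submodule.subset_span hj)) a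
    ext a
    simp only [singularSetLt, singularSetInfLt, Set.mem_setOf_eq]
    rw [hspan a]
end
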